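/- Let M be a finite-dimensional von Neumann algebra (finite-dimensional C*-algebra) acting on a finite-dimensional Hilbert space H, and let S ⊆ B(H) be an M′-bimodule (quantum graph). Then S is reflexive (M′ ⊆ S) if and only if every z ∈ M ⊗ M in the annihilator Ann(S) satisfies m(z) = 0, where m : M ⊗ M → M is the multiplication map, m(x ⊗ y) = xy. -/

import Mathlib

/-!
The orthogonal projection `p` onto `S` for the Hilbert–Schmidt inner product commutes with the
maps `x ↦ a x b`, `a, b ∈ M′`, since `S` is invariant under them and under their adjoints
`x ↦ a* x b*`. Expanding an `M′`-bimodule map `Q` on `B(H)` in matrix units, its coefficient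
matrices commute with `M′`, hence lie in `M′′ = M`, and so `Q = Φ_z` for some `z ∈ M ⊗ M`.
For `Q = 1 - p`, which kills `S`, this `z` lies in `Ann(S)`, so `m(z) = 0`, and every `T ∈ M′`
satisfies `T - p T = Φ_z(T) = T m(z) = 0`, i.e. `T ∈ S`.
-/

open TensorProduct Matrix

/-- The map `Φ` sending `x ⊗ y ∈ M ⊗ M` (for a subalgebra `M ⊆ B(H)`) to the
operator `T ↦ x T y` on `B(H)`. -/
noncomputable def PhiM {n : Type*} [Fintype n] [DecidableEq n]
    (M : Subalgebra ℂ (Matrix n n ℂ)) :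
    (↥M ⊗[ℂ] ↥M) →ₗ[ℂ] Matrix n n ℂ →ₗ[ℂ] Matrix n n ℂ :=
  TensorProduct.lift
  { toFun := fun x =>
      { toFun := fun y =>
          (LinearMap.mulLeft ℂ (x : Matrix n n ℂ)).comp
            (LinearMap.mulRight ℂ (y : Matrix n n ℂ))
        map_add' := fun y₁ y₂ => by
          ext T
          simp [Matrix.mul_add]
        map_smul' := fun c y => by
          ext T
          simp [Matrix.mul_smul] }
    map_add' := fun x₁ x₂ => by
      ext y T
      simp [Matrix.add_mul]
    map_smul' := fun c x => by
      ext y T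
      simp [smul_mul_assoc] }

theorem Submodule.starProjection_comm_of_adjoint_invariant {𝕜 E : Type*} [RCLike 𝕜]
    [NormedAddCommGroup E] [InnerProductSpace 𝕜 E] (K : Submodule 𝕜 E)
    [K.HasOrthogonalProjection] {T : E →ₗ[𝕜] E} {T' : E → E}
    (hadj : ∀ x y, inner 𝕜 (T' x) y = inner 𝕜 x (T y))
    (hT : ∀ v ∈ K, T v ∈ K) (hT' : ∀ v ∈ K, T' v ∈ K) (x : E) :
    K.starProjection (T x) = T (K.starProjection x) := by
  refine K.eq_starProjection_of_mem_orthogonal (hT _ (K.starProjection_apply_mem x)) ?_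
  rw [← map_sub, K.mem_orthogonal]
  intro v hv
  rw [← hadj]
  exact K.inner_right_of_mem_orthogonal (hT' v hv) (K.sub_starProjection_mem_orthogonal x)

namespace Matrix

section Coefficients

variable {n R : Type*} [Fintype n] [DecidableEq n] [CommSemiring R]

theorem eq_sum_smul_single (A : Matrix n n R) : A = ∑ i, ∑ j, A i j • single i j 1 := by
  simp_rw [smul_single, smul_eq_mul, mul_one]
  exact matrix_eq_sum_single A

theorem mul_single_one (a : Matrix n n R) (j k : n) :
    a * single j k 1 = ∑ m, a m j • single m k 1 := by
  ext p q
  simp [mul_apply, single_apply, sum_apply, ite_and]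

theorem single_one_mul (b : Matrix n n R) (j k : n) :
    single j k 1 * b = ∑ m, b k m • single j m 1 := by
  ext p q
  simp [mul_apply, single_apply, sum_apply, ite_and]

/-- `leftCoeff Q` and `rightCoeff Q` slice the coefficient array
`(i, j, k, l) ↦ Q (single j k 1) i l` of `Q` in the two ways that make
`Q T = ∑ k l, leftCoeff Q k l * T * single k l 1 = ∑ i j, single i j 1 * T * rightCoeff Q i j`. -/
def leftCoeff (Q : Matrix n n R →ₗ[R] Matrix n n R) (k l : n) : Matrix n n R :=
  of fun i j => Q (single j k 1) i l

def rightCoeff (Q : Matrix n n R →ₗ[R] Matrix n n R) (i j : n) : Matrix n n R :=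
  of fun k l => Q (single j k 1) i l

variable (Q : Matrix n n R →ₗ[R] Matrix n n R)

theorem linearMap_apply_eq_sum_single_mul_mul_single (T : Matrix n n R) :
    Q T = ∑ i, ∑ j, ∑ k, ∑ l, Q (single j k 1) i l • (single i j 1 * T * single k l 1) := by
  ext p q
  conv_lhs => rw [eq_sum_smul_single T]
  simp only [map_sum, map_smul]
  simp [single_mul_mul_single, sum_apply, single_apply, ite_and, mul_comm]

theorem linearMap_apply_eq_sum_single_mul_mul_rightCoeff (T : Matrix n n R) :
    Q T = ∑ i, ∑ j, single i j 1 * T * rightCoeff Q i j := by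
  conv_lhs => rw [linearMap_apply_eq_sum_single_mul_mul_single Q T]
  conv_rhs => enter [2, i, 2, j]; rw [eq_sum_smul_single (rightCoeff Q i j)]
  simp only [Finset.mul_sum, Matrix.mul_smul, rightCoeff, of_apply]

theorem sum_leftCoeff_eq_sum_rightCoeff {N : Type*} [AddCommMonoid N] [Module R N]
    (B : Matrix n n R →ₗ[R] Matrix n n R →ₗ[R] N) :
    ∑ k, ∑ l, B (leftCoeff Q k l) (single k l 1) =
      ∑ i, ∑ j, B (single i j 1) (rightCoeff Q i j) := by
  conv_lhs => enter [2, k, 2, l]; rw [eq_sum_smul_single (leftCoeff Q k l)]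
  conv_rhs => enter [2, i, 2, j]; rw [eq_sum_smul_single (rightCoeff Q i j)]
  simp only [map_sum, map_smul, LinearMap.sum_apply, LinearMap.smul_apply, leftCoeff,
    rightCoeff, of_apply, ← Fintype.sum_prod_type']
  exact Fintype.sum_equiv ((Equiv.prodAssoc n n (n × n)).symm.trans
    ((Equiv.prodComm _ _).trans (Equiv.prodAssoc n n (n × n)))) _ _ fun _ => rfl

theorem mul_leftCoeff_apply (a : Matrix n n R) (i j k l : n) :
    (a * leftCoeff Q k l) i j = (a * Q (single j k 1)) i l := by
  simp [leftCoeff, mul_apply]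

theorem leftCoeff_mul_apply (a : Matrix n n R) (i j k l : n) :
    (leftCoeff Q k l * a) i j = Q (a * single j k 1) i l := by
  simp only [mul_single_one, map_sum, map_smul]
  simp [leftCoeff, mul_apply, sum_apply, mul_comm]

theorem rightCoeff_mul_apply (b : Matrix n n R) (i j k l : n) :
    (rightCoeff Q i j * b) k l = (Q (single j k 1) * b) i l := by
  simp [rightCoeff, mul_apply]

theorem mul_rightCoeff_apply (b : Matrix n n R) (i j k l : n) :
    (b * rightCoeff Q i j) k l = Q (single j k 1 * b) i l := by
  simp only [single_one_mul, map_sum, map_smul]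
  simp [rightCoeff, mul_apply, sum_apply]

theorem commute_leftCoeff_iff (a : Matrix n n R) :
    (∀ k l, Commute a (leftCoeff Q k l)) ↔ ∀ x, a * Q x = Q (a * x) := by
  refine ⟨fun h => ?_, fun h k l => ext fun i j => ?_⟩
  · suffices LinearMap.mulLeft R a ∘ₗ Q = Q ∘ₗ LinearMap.mulLeft R a from
      fun x => LinearMap.congr_fun this x
    refine (stdBasis R n n).ext fun ⟨j, k⟩ => ext fun i l => ?_
    simpa [stdBasis_eq_single, mul_leftCoeff_apply, leftCoeff_mul_apply] using
      congr_fun₂ (h k l).eq i j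
  · rw [mul_leftCoeff_apply, leftCoeff_mul_apply, h]

theorem commute_rightCoeff_of_map_mul {b : Matrix n n R} (h : ∀ x, Q x * b = Q (x * b))
    (i j : n) : Commute b (rightCoeff Q i j) :=
  ext fun k l => by rw [mul_rightCoeff_apply, rightCoeff_mul_apply, h]

end Coefficients

section HilbertSchmidt

variable {𝕜 n : Type*} [RCLike 𝕜]

noncomputable def hsEquiv : Matrix n n 𝕜 ≃ₗ[𝕜] EuclideanSpace 𝕜 (n × n) :=
  (LinearEquiv.curry 𝕜 𝕜 n n).symm.trans (WithLp.linearEquiv 2 𝕜 (n × n → 𝕜)).symm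

@[simp]
theorem hsEquiv_apply (A : Matrix n n 𝕜) (p : n × n) : hsEquiv A p = A p.1 p.2 := rfl

theorem hsEquiv_mem_map_iff {W : Submodule 𝕜 (Matrix n n 𝕜)} {x : Matrix n n 𝕜} :
    hsEquiv x ∈ W.map hsEquiv.toLinearMap ↔ x ∈ W := by
  simp [Submodule.mem_map_equiv]

variable [Fintype n]

theorem inner_hsEquiv (A B : Matrix n n 𝕜) :
    inner 𝕜 (hsEquiv A) (hsEquiv B) = trace (Aᴴ * B) := by
  simp [PiLp.inner_apply, trace, mul_apply, Fintype.sum_prod_type, mul_comm]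
  exact Finset.sum_comm

theorem inner_hsEquiv_star_mul_mul (a b x y : Matrix n n 𝕜) :
    inner 𝕜 (hsEquiv (star a * x * star b)) (hsEquiv y) =
      inner 𝕜 (hsEquiv x) (hsEquiv (a * y * b)) := by
  simp only [inner_hsEquiv, conjTranspose_mul, star_eq_conjTranspose, conjTranspose_conjTranspose]
  rw [mul_assoc, trace_mul_comm]
  simp only [mul_assoc]

noncomputable def hsProj (W : Submodule 𝕜 (Matrix n n 𝕜)) : Matrix n n 𝕜 →ₗ[𝕜] Matrix n n 𝕜 :=
  hsEquiv.symm.toLinearMap ∘ₗ (W.map hsEquiv.toLinearMap).starProjection.toLinearMap ∘ₗ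
    hsEquiv.toLinearMap

variable (W : Submodule 𝕜 (Matrix n n 𝕜))

theorem hsEquiv_hsProj (x : Matrix n n 𝕜) :
    hsEquiv (hsProj W x) = (W.map hsEquiv.toLinearMap).starProjection (hsEquiv x) := by
  simp [hsProj]

theorem hsProj_mem (x : Matrix n n 𝕜) : hsProj W x ∈ W := by
  rw [← hsEquiv_mem_map_iff, hsEquiv_hsProj]
  exact Submodule.starProjection_apply_mem _ _

theorem hsProj_eq_self {w : Matrix n n 𝕜} (hw : w ∈ W) : hsProj W w = w := by
  rw [← hsEquiv.injective.eq_iff, hsEquiv_hsProj, Submodule.starProjection_eq_self_iff,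
    hsEquiv_mem_map_iff]
  exact hw

theorem hsProj_mul_mul {a b : Matrix n n 𝕜} (h : ∀ w ∈ W, a * w * b ∈ W)
    (h' : ∀ w ∈ W, star a * w * star b ∈ W) (x : Matrix n n 𝕜) :
    hsProj W (a * x * b) = a * hsProj W x * b := by
  let T := hsEquiv.toLinearMap ∘ₗ (LinearMap.mulRight 𝕜 b ∘ₗ LinearMap.mulLeft 𝕜 a) ∘ₗ
    hsEquiv.symm.toLinearMap
  have hT : ∀ y, T (hsEquiv y) = hsEquiv (a * y * b) := fun y => by simp [T]
  rw [← hsEquiv.injective.eq_iff, hsEquiv_hsProj, ← hT, ← hT, hsEquiv_hsProj]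
  refine Submodule.starProjection_comm_of_adjoint_invariant _
    (T' := fun v => hsEquiv (star a * hsEquiv.symm v * star b)) ?_ ?_ ?_ _
  · intro u v
    obtain ⟨y, rfl⟩ := hsEquiv.surjective v
    simp [hT, inner_hsEquiv_star_mul_mul]
  · rintro _ ⟨w, hw, rfl⟩
    simpa [hT, hsEquiv_mem_map_iff] using h w hw
  · rintro _ ⟨w, hw, rfl⟩
    simpa [hsEquiv_mem_map_iff] using h' w hw

end HilbertSchmidt

/-- The Hilbert–Schmidt projection `p` onto `M` is left `M`-linear, so its left coefficients lie
in `M′`; an element `T` of `M′′` then commutes with `p`, and `T = T p(1) = p(T) ∈ M`. -/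
theorem centralizer_centralizer_of_star_mem {𝕜 n : Type*} [RCLike 𝕜] [Fintype n] [DecidableEq n]
    {M : Subalgebra 𝕜 (Matrix n n 𝕜)} (hM : ∀ a ∈ M, star a ∈ M) :
    Subalgebra.centralizer 𝕜 (Subalgebra.centralizer 𝕜 (M : Set (Matrix n n 𝕜))) = M := by
  refine le_antisymm (fun T hT => ?_) (Subalgebra.le_centralizer_centralizer 𝕜)
  set p := hsProj (Subalgebra.toSubmodule M)
  have hp : ∀ a ∈ M, ∀ x, a * p x = p (a * x) := fun a ha x => by
    simpa using (hsProj_mul_mul _ (b := 1) (fun w hw => by simpa using M.mul_mem ha hw)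
      (fun w hw => by simpa using M.mul_mem (hM a ha) hw) x).symm
  have hcoeff : ∀ k l, leftCoeff p k l ∈ Subalgebra.centralizer 𝕜 (M : Set (Matrix n n 𝕜)) :=
    fun k l a ha => ((commute_leftCoeff_iff p a).mpr (hp a ha) k l).eq
  have hT : ∀ x, T * p x = p (T * x) :=
    (commute_leftCoeff_iff p T).mp fun k l => (hT _ (hcoeff k l)).symm
  have : T = p T := by
    simpa [p, hsProj_eq_self (Subalgebra.toSubmodule M) M.one_mem] using hT 1
  rw [this]
  exact hsProj_mem (Subalgebra.toSubmodule M) T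

end Matrix

section PhiM

variable {n : Type*} [Fintype n] [DecidableEq n] {M : Subalgebra ℂ (Matrix n n ℂ)}

theorem phiM_tmul (x y : M) (T : Matrix n n ℂ) :
    PhiM M (x ⊗ₜ[ℂ] y) T = (x : Matrix n n ℂ) * T * y := by
  simp [PhiM, Matrix.mul_assoc]

theorem phiM_apply_of_mem_centralizer (z : M ⊗[ℂ] M) {T : Matrix n n ℂ}
    (hT : T ∈ Subalgebra.centralizer ℂ (M : Set (Matrix n n ℂ))) :
    PhiM M z T = T * (TensorProduct.lift (LinearMap.mul ℂ M) z : Matrix n n ℂ) := by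
  induction z using TensorProduct.induction_on with
  | zero => simp
  | tmul x y => simp [phiM_tmul, ← Matrix.mul_assoc, hT x x.2]
  | add u v hu hv => simp [hu, hv, Matrix.mul_add]

theorem exists_phiM_eq_of_forall_mul_mul (hM : ∀ a ∈ M, star a ∈ M)
    (Q : Matrix n n ℂ →ₗ[ℂ] Matrix n n ℂ)
    (hQ : ∀ a ∈ Subalgebra.centralizer ℂ (M : Set (Matrix n n ℂ)),
      ∀ b ∈ Subalgebra.centralizer ℂ (M : Set (Matrix n n ℂ)), ∀ x, Q (a * x * b) = a * Q x * b) :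
    ∃ z : M ⊗[ℂ] M, PhiM M z = Q := by
  have hM'' := centralizer_centralizer_of_star_mem hM
  have hL : ∀ k l, leftCoeff Q k l ∈ M := fun k l => hM'' ▸ fun a ha =>
    ((commute_leftCoeff_iff Q a).mpr (fun x => by simpa using (hQ a ha 1 (one_mem _) x).symm)
      k l).eq
  have hR : ∀ i j, rightCoeff Q i j ∈ M := fun i j => hM'' ▸ fun b hb =>
    (commute_rightCoeff_of_map_mul Q (fun x => by simpa using (hQ 1 (one_mem _) b hb x).symm)
      i j).eq
  set π := hsProj (Subalgebra.toSubmodule M)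
  have hπR : ∀ i j, π (rightCoeff Q i j) = rightCoeff Q i j := fun i j => hsProj_eq_self _ (hR i j)
  refine ⟨∑ k, ∑ l, (⟨leftCoeff Q k l, hL k l⟩ : M) ⊗ₜ[ℂ]
    (⟨π (single k l 1), hsProj_mem (Subalgebra.toSubmodule M) _⟩ : M), LinearMap.ext fun T => ?_⟩
  calc _ = ∑ k, ∑ l, leftCoeff Q k l * T * π (single k l 1) := by simp [phiM_tmul]
    _ = ∑ i, ∑ j, single i j 1 * T * π (rightCoeff Q i j) := by
      simpa using sum_leftCoeff_eq_sum_rightCoeff Q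
        (((LinearMap.mul ℂ _).comp (LinearMap.mulRight ℂ T)).compl₂ π)
    _ = ∑ i, ∑ j, single i j 1 * T * rightCoeff Q i j := by simp only [hπR]
    _ = Q T := (linearMap_apply_eq_sum_single_mul_mul_rightCoeff Q T).symm

end PhiM

/-- a quantum graph `S` on a finite-dimensional von Neumann algebra
`M ⊆ B(H)` (an `M′`-bimodule) is reflexive (`M′ ⊆ S`) iff every `z ∈ M ⊗ M` in the
annihilator of `S` satisfies `m(z) = 0`, where `m` is the multiplication map. -/
theorem stmt_12 {n : Type*} [Fintype n] [DecidableEq n]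
    (M : Subalgebra ℂ (Matrix n n ℂ)) (hMstar : ∀ a ∈ M, star a ∈ M)
    (S : Submodule ℂ (Matrix n n ℂ))
    (hbim : ∀ a ∈ Subalgebra.centralizer ℂ (M : Set (Matrix n n ℂ)),
      ∀ b ∈ Subalgebra.centralizer ℂ (M : Set (Matrix n n ℂ)),
        ∀ T ∈ S, a * T * b ∈ S) :
    (∀ T ∈ Subalgebra.centralizer ℂ (M : Set (Matrix n n ℂ)), T ∈ S) ↔
      (∀ z : ↥M ⊗[ℂ] ↥M, (∀ T ∈ S, PhiM M z T = 0) → TensorProduct.lift (LinearMap.mul ℂ ↥M) z = 0) := by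
  constructor
  · intro hS z hz
    apply Subtype.ext
    simpa [phiM_apply_of_mem_centralizer] using hz 1 (hS 1 (one_mem _))
  · intro h T hT
    have hM' : ∀ a ∈ Subalgebra.centralizer ℂ (M : Set (Matrix n n ℂ)),
        star a ∈ Subalgebra.centralizer ℂ (M : Set (Matrix n n ℂ)) :=
      fun a ha => Set.star_mem_centralizer' hMstar ha
    set p := hsProj S
    obtain ⟨z, hz⟩ := exists_phiM_eq_of_forall_mul_mul hMstar (LinearMap.id - p)
      fun a ha b hb x => by
        simp [p, hsProj_mul_mul S (hbim a ha b hb) (hbim _ (hM' a ha) _ (hM' b hb)), mul_sub,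
          sub_mul]
    have hmz : TensorProduct.lift (LinearMap.mul ℂ M) z = 0 :=
      h z fun T hT => by simp [hz, p, hsProj_eq_self S hT]
    have hTp : T - p T = 0 := by
      simpa [hz, hmz] using phiM_apply_of_mem_centralizer z hT
    rw [sub_eq_zero.mp hTp]
    exact hsProj_mem S T
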